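/- Let x be a Jordan element of a Lie algebra L (ad(x)^3 = 0) over a field of characteristic ≠ 2, 3. Then for every a ∈ L, the operator identity ad(ad(x)^2(a))^2 = ad(x)^2 ∘ ad(a)^2 ∘ ad(x)^2 holds on L. -/

import Mathlib

/-!
Write `X = ad x` and `A = ad a`. Since `ad` is a Lie algebra morphism, `ad (X² a) = [X, [X, A]]`
and `0 = ad (X³ a) = [X, [X, [X, A]]]`; expanding the latter with `X³ = 0` leaves
`3 (X A X² - X² A X) = 0`, so `X A X² = X² A X`, and then `X² A X² = X A X³ = 0`.
Expanding `[X, [X, A]]² = (X² A - 2 X A X + A X²)²`, every term other than `X² A² X²`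
cancels by these two relations and `X³ = 0`.
-/

section Ring

variable {R : Type*} [Ring R] (X A : R)

lemma lie_lie_lie_eq :
    ⁅X, ⁅X, ⁅X, A⁆⁆⁆ = X ^ 3 * A - 3 * (X ^ 2 * A * X) + 3 * (X * A * X ^ 2) - A * X ^ 3 := by
  simp only [Ring.lie_def]
  noncomm_ring

variable {X A}

lemma mul_mul_sq_eq_sq_mul_mul_of_lie_lie_lie_eq_zero (hX : X ^ 3 = 0)
    (h3 : IsLeftRegular (3 : R)) (h : ⁅X, ⁅X, ⁅X, A⁆⁆⁆ = 0) :
    X * A * X ^ 2 = X ^ 2 * A * X := by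
  rw [lie_lie_lie_eq, hX, zero_mul, mul_zero, zero_sub, sub_zero, neg_add_eq_zero] at h
  exact (h3 h).symm

theorem lie_lie_sq_eq_of_pow_three_eq_zero (hX : X ^ 3 = 0) (h3 : IsLeftRegular (3 : R))
    (h : ⁅X, ⁅X, ⁅X, A⁆⁆⁆ = 0) :
    ⁅X, ⁅X, A⁆⁆ ^ 2 = X ^ 2 * A ^ 2 * X ^ 2 := by
  have hD : X ^ 2 * A * X - X * A * X ^ 2 = 0 := by
    rw [mul_mul_sq_eq_sq_mul_mul_of_lie_lie_lie_eq_zero hX h3 h, sub_self]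
  have hZ : X ^ 2 * A * X ^ 2 = 0 := by
    calc X ^ 2 * A * X ^ 2 = X ^ 2 * A * X * X := by noncomm_ring
      _ = X * A * X ^ 3 := by
        rw [← mul_mul_sq_eq_sq_mul_mul_of_lie_lie_lie_eq_zero hX h3 h]; noncomm_ring
      _ = 0 := by rw [hX, mul_zero]
  calc ⁅X, ⁅X, A⁆⁆ ^ 2
      = X ^ 2 * A ^ 2 * X ^ 2 + X ^ 2 * A * X ^ 2 * A + A * (X ^ 2 * A * X ^ 2)
        - 2 * ((X ^ 2 * A * X - X * A * X ^ 2) * A * X)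
        + 2 * (X * A * (X ^ 2 * A * X - X * A * X ^ 2))
        - 2 * (X * A * X ^ 3 * A) + A * X ^ 3 * X * A - 2 * (A * X ^ 3 * A * X) := by
        simp only [Ring.lie_def]; noncomm_ring
    _ = X ^ 2 * A ^ 2 * X ^ 2 := by simp only [hD, hZ, hX]; noncomm_ring

end Ring

section Adjoint

attribute [local instance] LieRing.ofAssociativeRing

lemma LieAlgebra.ad_ad_pow_apply {R L : Type*} [CommRing R] [LieRing L] [LieAlgebra R L]
    (x a : L) (n : ℕ) :
    ad R L ((ad R L x ^ n) a) = (⁅ad R L x, ·⁆)^[n] (ad R L a) := by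
  induction n with
  | zero => rfl
  | succ n ih => rw [pow_succ', Module.End.mul_apply, ad_apply, LieHom.map_lie, ih,
      Function.iterate_succ_apply']

end Adjoint

theorem stmt11_general {F L : Type*} [Field F] [LieRing L] [LieAlgebra F L]
    (h3 : (3 : F) ≠ 0)
    (x : L) (hx : (LieAlgebra.ad F L x) ^ 3 = 0) (a : L) :
    (LieAlgebra.ad F L (((LieAlgebra.ad F L x) ^ 2) a)) ^ 2 =
      (LieAlgebra.ad F L x) ^ 2 * (LieAlgebra.ad F L a) ^ 2 * (LieAlgebra.ad F L x) ^ 2 := by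
  have h3' : IsLeftRegular (3 : Module.End F L) := by
    rw [← map_ofNat (algebraMap F (Module.End F L)) 3]
    exact (h3.isUnit.map _).isRegular.left
  have hcomm : ⁅LieAlgebra.ad F L x, ⁅LieAlgebra.ad F L x, ⁅LieAlgebra.ad F L x,
      LieAlgebra.ad F L a⁆⁆⁆ = 0 := by
    simpa [hx] using (LieAlgebra.ad_ad_pow_apply (R := F) x a 3).symm
  rw [LieAlgebra.ad_ad_pow_apply]
  exact lie_lie_sq_eq_of_pow_three_eq_zero hx h3' hcomm

/-- If `x` is a Jordan element (`ad(x)^3 = 0`) of a Lie algebra `L` over a field of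
characteristic `≠ 2, 3`, then `ad(X²(a))² = X² A² X²` for every `a ∈ L`. -/
theorem stmt11 {F L : Type*} [Field F] [LieRing L] [LieAlgebra F L]
    (h2 : (2 : F) ≠ 0) (h3 : (3 : F) ≠ 0)
    (x : L) (hx : (LieAlgebra.ad F L x) ^ 3 = 0) (a : L) :
    (LieAlgebra.ad F L (((LieAlgebra.ad F L x) ^ 2) a)) ^ 2 =
      (LieAlgebra.ad F L x) ^ 2 * (LieAlgebra.ad F L a) ^ 2 * (LieAlgebra.ad F L x) ^ 2 :=
  stmt11_general h3 x hx a
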